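/- Let X be a complete normed vector space (over ℝ or ℂ), let Ψ : [1,∞) → X, let M ∈ ℕ, c ≥ 0, and let ε₁,…,ε_M, η₁,…,η_M be real numbers with η_i > 2ε_i ≥ 0 for every i ∈ {1,…,M}. Assume that for all t₁, t₂ with 1 < t₁ ≤ t₂ one has ‖Ψ(t₂) − Ψ(t₁)‖ ≤ c · Σ_{i=1}^{M} t₂^{ε_i} / t₁^{η_i}. Then Ψ(t) converges in X as t → ∞, i.e. there exists Ψ⁺ ∈ X with lim_{t→∞} ‖Ψ(t) − Ψ⁺‖ = 0. -/

import Mathlib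

/-!
Along the doubly exponential times `aₙ = 2 ^ 2 ^ n` one has `aₙ₊₁ = aₙ²`, so for
`aₙ ≤ t ≤ aₙ₊₁` the hypothesis bounds `‖Ψ aₙ₊₁ - Ψ t‖` by `c ∑ᵢ aₙ ^ (2εᵢ - ηᵢ)`,
a summable sequence because `2εᵢ - ηᵢ < 0`. Hence `Ψ aₙ` is Cauchy, and every large `t`
lies in some block `[aₙ, aₙ₊₁]` whose right end is close to the limit.
-/

open Filter Topology Real

lemma exists_ge_mem_Icc_of_tendsto_atTop {α : Type*} [LinearOrder α] {a : ℕ → α}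
    (ha : Tendsto a atTop atTop) {N : ℕ} {t : α} (ht : a N ≤ t) :
    ∃ n ≥ N, t ∈ Set.Icc (a n) (a (n + 1)) := by
  obtain ⟨k, hk⟩ := (tendsto_atTop.1 ha t).exists_forall_of_atTop
  suffices ∀ j, t ≤ a (N + j + 1) → ∃ n ≥ N, t ∈ Set.Icc (a n) (a (n + 1)) from
    this k (hk _ (by omega))
  intro j
  induction j with
  | zero => exact fun h => ⟨N, le_rfl, ht, h⟩
  | succ j ih =>
    intro h
    by_cases hj : t ≤ a (N + j + 1)
    · exact ih hj
    · exact ⟨N + j + 1, by omega, (not_le.1 hj).le, h⟩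

theorem exists_tendsto_of_dist_le_summable {α X : Type*} [LinearOrder α] [PseudoMetricSpace X]
    [CompleteSpace X] {f : α → X} {a : ℕ → α} {b : ℕ → ℝ} (ha_mono : Monotone a)
    (ha : Tendsto a atTop atTop) (hb : Summable b)
    (hfb : ∀ n t, a n ≤ t → t ≤ a (n + 1) → dist (f (a (n + 1))) (f t) ≤ b n) :
    ∃ L, Tendsto f atTop (𝓝 L) := by
  have hcauchy : CauchySeq (f ∘ a) :=
    cauchySeq_of_dist_le_of_summable b
      (fun n => dist_comm (f (a n)) _ ▸ hfb n (a n) le_rfl (ha_mono n.le_succ)) hb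
  obtain ⟨L, hL⟩ := cauchySeq_tendsto_of_complete hcauchy
  have hu : Tendsto (fun n => b n + dist (f (a (n + 1))) L) atTop (𝓝 0) := by
    simpa using hb.tendsto_atTop_zero.add
      (tendsto_iff_dist_tendsto_zero.1 (hL.comp (tendsto_add_atTop_nat 1)))
  refine ⟨L, Metric.tendsto_nhds.2 fun δ hδ => ?_⟩
  obtain ⟨N, hN⟩ := (hu.eventually (gt_mem_nhds hδ)).exists_forall_of_atTop
  filter_upwards [eventually_ge_atTop (a N)] with t ht
  obtain ⟨n, hn, hnt, htn⟩ := exists_ge_mem_Icc_of_tendsto_atTop ha ht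
  calc dist (f t) L ≤ dist (f (a (n + 1))) (f t) + dist (f (a (n + 1))) L :=
        dist_triangle_left _ _ _
    _ ≤ b n + dist (f (a (n + 1))) L := by gcongr; exact hfb n t hnt htn
    _ < δ := hN n hn

lemma tendsto_two_pow_two_pow : Tendsto (fun n : ℕ => (2 : ℝ) ^ 2 ^ n) atTop atTop :=
  (tendsto_pow_atTop_atTop_of_one_lt one_lt_two).comp
    (tendsto_pow_atTop_atTop_of_one_lt one_lt_two)

lemma monotone_two_pow_two_pow : Monotone fun n : ℕ => (2 : ℝ) ^ 2 ^ n :=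
  fun _ _ h => pow_le_pow_right₀ one_le_two (Nat.pow_le_pow_right two_pos h)

lemma two_pow_two_pow_succ (n : ℕ) : (2 : ℝ) ^ 2 ^ (n + 1) = ((2 : ℝ) ^ 2 ^ n) ^ 2 := by
  rw [pow_succ, pow_mul]

lemma summable_two_pow_two_pow_rpow {s : ℝ} (hs : s < 0) :
    Summable fun n : ℕ => ((2 : ℝ) ^ 2 ^ n) ^ s := by
  have hr : (2 : ℝ) ^ s < 1 := rpow_lt_one_of_one_lt_of_neg one_lt_two hs
  have hr0 : 0 ≤ (2 : ℝ) ^ s := rpow_nonneg zero_le_two s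
  refine (summable_geometric_of_lt_one hr0 hr).of_nonneg_of_le (fun n => by positivity)
    fun n => ?_
  rw [← rpow_natCast 2, ← rpow_mul zero_le_two, mul_comm, rpow_mul zero_le_two, rpow_natCast]
  exact pow_le_pow_of_le_one hr0 hr.le Nat.lt_two_pow_self.le

lemma sq_rpow_div_rpow_le {x t ε η : ℝ} (hx : 0 < x) (hxt : x ≤ t) (hη : 0 ≤ η) :
    (x ^ 2) ^ ε / t ^ η ≤ x ^ (2 * ε - η) := by
  rw [rpow_sub hx, ← rpow_natCast, ← rpow_mul hx.le, Nat.cast_ofNat]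
  gcongr

theorem telescopic_convergence {X : Type*} [NormedAddCommGroup X]
    [CompleteSpace X] (Ψ : ℝ → X) (M : ℕ) (c : ℝ) (hc : 0 ≤ c)
    (ε η : Fin M → ℝ) (hε : ∀ i, 0 ≤ ε i) (hη : ∀ i, 2 * ε i < η i)
    (hdiff : ∀ t₁ t₂ : ℝ, 1 < t₁ → t₁ ≤ t₂ →
      ‖Ψ t₂ - Ψ t₁‖ ≤ c * ∑ i, t₂ ^ ε i / t₁ ^ η i) :
    ∃ Ψplus : X, Filter.Tendsto (fun t => ‖Ψ t - Ψplus‖) Filter.atTop (nhds 0) := by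
  have hsum : Summable fun n : ℕ => c * ∑ i, ((2 : ℝ) ^ 2 ^ n) ^ (2 * ε i - η i) :=
    (summable_sum fun i _ => summable_two_pow_two_pow_rpow (by linarith [hη i])).mul_left c
  have hblock : ∀ (n : ℕ) (t : ℝ), 2 ^ 2 ^ n ≤ t → t ≤ 2 ^ 2 ^ (n + 1) →
      dist (Ψ (2 ^ 2 ^ (n + 1))) (Ψ t) ≤ c * ∑ i, ((2 : ℝ) ^ 2 ^ n) ^ (2 * ε i - η i) := by
    intro n t hnt htn
    have h_one_lt : (1 : ℝ) < 2 ^ 2 ^ n := one_lt_pow₀ one_lt_two (by positivity)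
    rw [dist_eq_norm]
    refine (hdiff t _ (h_one_lt.trans_le hnt) htn).trans ?_
    gcongr with i
    rw [two_pow_two_pow_succ]
    exact sq_rpow_div_rpow_le (by positivity) hnt (by linarith [hε i, hη i])
  obtain ⟨L, hL⟩ := exists_tendsto_of_dist_le_summable monotone_two_pow_two_pow
    tendsto_two_pow_two_pow hsum hblock
  exact ⟨L, tendsto_iff_norm_sub_tendsto_zero.1 hL⟩
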